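/- For the rotationally symmetric metric g = ((a₁+a₂)/2 + h(cos r))² dθ² + sin²r dφ² with h(x) = (a₁−a₂)x/2, the vector field W = (sin(2r)/2) ∂/∂r is not a projective vector field: it fails to satisfy the projective vector field PDE system 0 = −W¹_{rr} + ... with R⁰ = R² = 0, R¹ = ((a₂−a₁)(cos²r+1) − 2(a₁+a₂)cos r)/(((a₁−a₂)cos r + a₁+a₂) sin r), R³ = −2 sin(2r)/((a₁−a₂)cos r + a₁+a₂)². -/

import Mathlib

/-- The coefficient `R¹` of the projective vector field PDE system for the rotationally
symmetric Besse metric `g = ((a₁+a₂)/2 + h(cos r))² dθ² + sin²(r) dφ²`,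
`h(x) = (a₁−a₂)x/2`:
`R¹(r) = ((a₂−a₁)(cos²r + 1) − 2(a₁+a₂)cos r)/(((a₁−a₂)cos r + a₁+a₂) sin r)`. -/
noncomputable def Rone (a₁ a₂ : ℕ) (r : ℝ) : ℝ :=
  (((a₂ : ℝ) - a₁) * ((Real.cos r)^2 + 1) - 2 * ((a₁ : ℝ) + a₂) * Real.cos r) /
    ((((a₁ : ℝ) - a₂) * Real.cos r + a₁ + a₂) * Real.sin r)

/-! At `r = π/2` we have `W¹ = 0`, `W¹_r = -1` and `W¹_rr = 0`, so the second equation reduces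
to `R¹(π/2) = 0`, whereas `R¹(π/2) = (a₂ - a₁)/(a₁ + a₂) < 0`. Since `W¹` vanishes there, the
value of `R¹_r` (a junk value wherever `Rone` is not differentiable) never matters. -/

open Real

lemma hasDerivAt_sin_two_mul_div_two (x : ℝ) :
    HasDerivAt (fun s => sin (2 * s) / 2) (cos (2 * x)) x := by
  simpa using (((hasDerivAt_id x).const_mul 2).sin).div_const 2

lemma deriv_sin_two_mul_div_two : deriv (fun s => sin (2 * s) / 2) = fun s => cos (2 * s) :=
  funext fun x => (hasDerivAt_sin_two_mul_div_two x).deriv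

lemma deriv_cos_two_mul (x : ℝ) : deriv (fun s => cos (2 * s)) x = -2 * sin (2 * x) := by
  have h : HasDerivAt (fun s => cos (2 * s)) (-sin (2 * x) * 2) x := by
    simpa using ((hasDerivAt_id x).const_mul 2).cos
  rw [h.deriv, neg_mul_comm, mul_comm]

lemma Rone_pi_div_two (a₁ a₂ : ℕ) : Rone a₁ a₂ (π / 2) = ((a₂ : ℝ) - a₁) / (a₁ + a₂) := by
  rw [Rone, cos_pi_div_two, sin_pi_div_two]
  ring_nf

lemma Rone_pi_div_two_ne_zero {a₁ a₂ : ℕ} (h : a₂ < a₁) : Rone a₁ a₂ (π / 2) ≠ 0 := by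
  have hlt : (a₂ : ℝ) < a₁ := by exact_mod_cast h
  have ha₂ : (0 : ℝ) ≤ a₂ := a₂.cast_nonneg
  rw [Rone_pi_div_two]
  exact div_ne_zero (by linarith) (by linarith)

theorem W_is_not_a_projective_vector_field_general (a₁ a₂ : ℕ) (h : a₂ < a₁) :
    ¬ ∀ r ∈ Set.Ioo (0 : ℝ) Real.pi,
        -(deriv (deriv (fun s => Real.sin (2*s) / 2)) r)
          - Rone a₁ a₂ r * deriv (fun s => Real.sin (2*s) / 2) r
          - deriv (Rone a₁ a₂) r * (Real.sin (2*r) / 2) = 0 := by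
  intro H
  have hπ : 2 * (π / 2) = π := by ring
  have := H (π / 2) ⟨pi_div_two_pos, half_lt_self pi_pos⟩
  simp only [deriv_sin_two_mul_div_two, deriv_cos_two_mul, hπ, sin_pi, cos_pi] at this
  exact Rone_pi_div_two_ne_zero h (by linarith)

/-- For the rotationally symmetric metric above, the vector field
`W = (sin(2r)/2) ∂/∂r` (so `W¹ = sin(2r)/2`, `W² = 0`) is not projective: with
`R⁰ = R² = 0`, the second equation of the projective vector field PDE system,
`0 = −W¹_{rr} − R¹ W¹_r − R¹_r W¹`, fails at some `r ∈ (0,π)`. -/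
theorem W_is_not_a_projective_vector_field (a₁ a₂ : ℕ) (h : a₂ < a₁) (h2 : 1 ≤ a₂) :
    ¬ ∀ r ∈ Set.Ioo (0 : ℝ) Real.pi,
        -(deriv (deriv (fun s => Real.sin (2*s) / 2)) r)
          - Rone a₁ a₂ r * deriv (fun s => Real.sin (2*s) / 2) r
          - deriv (Rone a₁ a₂) r * (Real.sin (2*r) / 2) = 0 :=
  W_is_not_a_projective_vector_field_general a₁ a₂ h
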